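/- If 0 < ε ≤ 1/2 and t ≥ n²·W/ε and μ(x) ≥ 1/n (where n is the number of vertices and W the maximum edge weight), then (1−ε)·μ(x) ≤ δ_t(x)/t ≤ (1+ε)·μ(x). -/

import Mathlib

open scoped ENNReal

/-- A walk of length `t` in the graph: `t+1` vertices with consecutive ones joined by edges
(edges and vertices may repeat). -/
def IsWalk {n : ℕ} (E : Fin n → Fin n → Prop) {t : ℕ} (p : Fin (t + 1) → Fin n) : Prop :=
  ∀ i : Fin t, E (p i.castSucc) (p i.succ)

/-- The weight of a walk: the sum of its edge weights. -/
def walkWeight {n : ℕ} (w : Fin n → Fin n → ℕ) {t : ℕ} (p : Fin (t + 1) → Fin n) : ℕ :=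
  ∑ i : Fin t, w (p i.castSucc) (p i.succ)
/-- `y` is reachable from `x` (by a path of length ≥ 0). -/
def Reachable {n : ℕ} (E : Fin n → Fin n → Prop) (x y : Fin n) : Prop :=
  ∃ (t : ℕ) (p : Fin (t + 1) → Fin n), IsWalk E p ∧ p 0 = x ∧ p (Fin.last t) = y

/-- The set of mean weights of cycles reachable from `x`. -/
def cycleMeans {n : ℕ} (E : Fin n → Fin n → Prop) (w : Fin n → Fin n → ℕ)
    (x : Fin n) : Set ℝ :=
  {q | ∃ (t : ℕ) (p : Fin (t + 1) → Fin n), 0 < t ∧ IsWalk E p ∧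
    p (Fin.last t) = p 0 ∧ Reachable E x (p 0) ∧ q = (walkWeight w p : ℝ) / t}

/-- `mcm E w x` is `μ(x)`, the minimum mean weight over all cycles reachable from `x`. -/
noncomputable def mcm {n : ℕ} (E : Fin n → Fin n → Prop) (w : Fin n → Fin n → ℕ)
    (x : Fin n) : ℝ :=
  sInf (cycleMeans E w x)
/-- `deltaNat E w t x` is `δ_t(x)`, the minimum weight of all paths of length exactly `t`
starting at `x`. -/
noncomputable def deltaNat {n : ℕ} (E : Fin n → Fin n → Prop) (w : Fin n → Fin n → ℕ)
    (t : ℕ) (x : Fin n) : ℕ :=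
  sInf {c : ℕ | ∃ p : Fin (t + 1) → Fin n, IsWalk E p ∧ p 0 = x ∧ c = walkWeight w p}

/-!
Walks are encoded as sequences `ℕ → Fin n`, so that cutting and gluing them is index arithmetic.
Among the first `n + 1` vertices of a walk two coincide, so a walk of length `≥ n` contains a
cycle of length `≤ n`. Deleting such cycles one at a time, a walk of length `t` from a vertex
reachable from `x` weighs at least `(t - s) * m` plus the weight of a walk of length `s < n` with
the same ends, whenever `m` bounds from below the means of the reachable cycles of length `≤ n`.
With `m = μ(x)` this gives `δ_t(x) ≥ (t - n) * μ(x)`; applied to closed walks it shows that the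
short cycles have the same lower bounds as all reachable cycles. Conversely, reaching a short
cycle of mean `q` in fewer than `n` steps and then going around it gives
`δ_t(x) ≤ (n - 1) * W + (t + n) * q`. As `n * μ(x) ≥ 1` forces `W ≥ 1`, both error terms are at
most `ε * t * μ(x)` once `ε * t ≥ n² * W`.
-/

section WalkSeq

variable {V : Type*}

def IsWalkSeq (E : V → V → Prop) (t : ℕ) (P : ℕ → V) : Prop :=
  ∀ i < t, E (P i) (P (i + 1))

def seqWeight (w : V → V → ℕ) (t : ℕ) (P : ℕ → V) : ℕ :=
  ∑ i ∈ Finset.range t, w (P i) (P (i + 1))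

def seqAppend (s : ℕ) (P Q : ℕ → V) : ℕ → V :=
  fun m => if m ≤ s then P m else Q (m - s)

variable {E : V → V → Prop} {w : V → V → ℕ} {P Q C : ℕ → V} {s t u : ℕ}

theorem isWalkSeq_add_iff {a b : ℕ} :
    IsWalkSeq E (a + b) P ↔ IsWalkSeq E a P ∧ IsWalkSeq E b (fun m => P (a + m)) := by
  refine ⟨fun h => ⟨fun i hi => h i (by omega), fun i hi => h (a + i) (by omega)⟩, ?_⟩
  rintro ⟨ha, hb⟩ i hi
  rcases lt_or_ge i a with hia | hia
  · exact ha i hia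
  · obtain ⟨j, rfl⟩ := Nat.exists_eq_add_of_le hia
    exact hb j (by omega)

theorem seqWeight_add {a b : ℕ} :
    seqWeight w (a + b) P = seqWeight w a P + seqWeight w b (fun m => P (a + m)) :=
  Finset.sum_range_add _ _ _

theorem IsWalkSeq.congr (hP : IsWalkSeq E t P) (h : ∀ m ≤ t, P m = Q m) : IsWalkSeq E t Q :=
  fun i hi => h i hi.le ▸ h (i + 1) hi ▸ hP i hi

theorem seqWeight_congr (h : ∀ m ≤ t, P m = Q m) : seqWeight w t P = seqWeight w t Q :=
  Finset.sum_congr rfl fun i hi => by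
    rw [h i (Finset.mem_range.1 hi).le, h (i + 1) (Finset.mem_range.1 hi)]

theorem seqWeight_mono (h : s ≤ t) : seqWeight w s P ≤ seqWeight w t P :=
  Finset.sum_le_sum_of_subset (Finset.range_subset_range.2 h)

theorem IsWalkSeq.seqWeight_le {W : ℕ} (hW : ∀ a b, E a b → w a b ≤ W)
    (hP : IsWalkSeq E t P) : seqWeight w t P ≤ t * W :=
  (Finset.sum_le_sum fun i hi => hW _ _ (hP i (Finset.mem_range.1 hi))).trans_eq (by simp)

theorem seqAppend_of_le {m : ℕ} (h : m ≤ s) : seqAppend s P Q m = P m :=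
  if_pos h

theorem seqAppend_add (h : P s = Q 0) (m : ℕ) : seqAppend s P Q (s + m) = Q m := by
  unfold seqAppend
  split_ifs with hm
  · obtain rfl : m = 0 := by omega
    simpa using h
  · rw [Nat.add_sub_cancel_left]

theorem IsWalkSeq.append (hP : IsWalkSeq E s P) (hQ : IsWalkSeq E u Q) (h : P s = Q 0) :
    IsWalkSeq E (s + u) (seqAppend s P Q) := by
  rw [isWalkSeq_add_iff, funext (seqAppend_add h)]
  exact ⟨hP.congr fun m hm => (seqAppend_of_le hm).symm, hQ⟩

theorem seqWeight_append (h : P s = Q 0) :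
    seqWeight w (s + u) (seqAppend s P Q) = seqWeight w s P + seqWeight w u Q := by
  rw [seqWeight_add, funext (seqAppend_add h), seqWeight_congr fun m hm => seqAppend_of_le hm]

theorem IsWalkSeq.exists_removeLoop {i d r : ℕ} (hP : IsWalkSeq E (i + d + r) P)
    (hloop : P i = P (i + d)) :
    ∃ Q, IsWalkSeq E (i + r) Q ∧ Q 0 = P 0 ∧ Q (i + r) = P (i + d + r) ∧
      seqWeight w (i + r) Q + seqWeight w d (fun k => P (i + k)) = seqWeight w (i + d + r) P := by
  obtain ⟨hid, hr⟩ := isWalkSeq_add_iff.1 hP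
  refine ⟨seqAppend i P (fun k => P (i + d + k)), (isWalkSeq_add_iff.1 hid).1.append hr hloop,
    seqAppend_of_le (Nat.zero_le _), seqAppend_add hloop r, ?_⟩
  rw [seqWeight_append hloop, seqWeight_add (a := i + d) (b := r), seqWeight_add (a := i) (b := d)]
  ring

theorem IsWalkSeq.exists_iterate {c : ℕ} (hC : IsWalkSeq E c C) (hcl : C c = C 0) (k : ℕ) :
    ∃ R, IsWalkSeq E (k * c) R ∧ R 0 = C 0 ∧ R (k * c) = C 0 ∧
      seqWeight w (k * c) R = k * seqWeight w c C := by
  induction k with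
  | zero => exact ⟨C, fun i hi => by simp at hi, rfl, by simp, by simp [seqWeight]⟩
  | succ k ih =>
    obtain ⟨R, hR, hR0, hRk, hRw⟩ := ih
    have hjoin : R (k * c) = C 0 := hRk
    refine ⟨seqAppend (k * c) R C, ?_, ?_, ?_, ?_⟩
    · rw [Nat.succ_mul]; exact hR.append hC hjoin
    · rw [seqAppend_of_le (Nat.zero_le _), hR0]
    · rw [Nat.succ_mul, seqAppend_add hjoin, hcl]
    · rw [Nat.succ_mul, seqWeight_append hjoin, hRw, Nat.succ_mul]

theorem exists_loop [Fintype V] (P : ℕ → V) :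
    ∃ i d, 0 < d ∧ i + d ≤ Fintype.card V ∧ P i = P (i + d) := by
  obtain ⟨a, b, hab, he⟩ :=
    Fintype.exists_ne_map_eq_of_card_lt (fun k : Fin (Fintype.card V + 1) => P k) (by simp)
  have ha := a.isLt
  have hb := b.isLt
  rcases Nat.lt_or_gt_of_ne (Fin.val_ne_of_ne hab) with h | h
  · exact ⟨a, b - a, by omega, by omega, by rwa [Nat.add_sub_cancel' h.le]⟩
  · exact ⟨b, a - b, by omega, by omega, by rw [Nat.add_sub_cancel' h.le]; exact he.symm⟩

end WalkSeq

theorem Fin.exists_eq_comp_val {α : Type*} {t : ℕ} (p : Fin (t + 1) → α) :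
    ∃ P : ℕ → α, p = fun m : Fin (t + 1) => P m :=
  ⟨fun m => if h : m < t + 1 then p ⟨m, h⟩ else p 0, funext fun m => by simp [m.isLt]⟩

section CycleMeans

variable {n : ℕ} {E : Fin n → Fin n → Prop} {w : Fin n → Fin n → ℕ} {P C : ℕ → Fin n}
  {x y z : Fin n} {s t : ℕ}

theorem isWalk_iff_isWalkSeq : IsWalk E (fun m : Fin (t + 1) => P m) ↔ IsWalkSeq E t P :=
  ⟨fun h i hi => h ⟨i, hi⟩, fun h i => h i i.isLt⟩

theorem walkWeight_eq_seqWeight : walkWeight w (fun m : Fin (t + 1) => P m) = seqWeight w t P :=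
  Fin.sum_univ_eq_sum_range (fun i => w (P i) (P (i + 1))) t

theorem reachable_iff_exists_isWalkSeq :
    Reachable E x y ↔ ∃ t P, IsWalkSeq E t P ∧ P 0 = x ∧ P t = y := by
  constructor
  · rintro ⟨t, p, hp, h0, ht⟩
    obtain ⟨P, rfl⟩ := Fin.exists_eq_comp_val p
    exact ⟨t, P, isWalk_iff_isWalkSeq.1 hp, h0, ht⟩
  · rintro ⟨t, P, hP, h0, ht⟩
    exact ⟨t, fun m => P m, isWalk_iff_isWalkSeq.2 hP, h0, ht⟩

theorem Reachable.refl (x : Fin n) : Reachable E x x :=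
  reachable_iff_exists_isWalkSeq.2 ⟨0, fun _ => x, fun _ hi => absurd hi (Nat.not_lt_zero _), rfl, rfl⟩

theorem IsWalkSeq.reachable (hP : IsWalkSeq E t P) : Reachable E (P 0) (P t) :=
  reachable_iff_exists_isWalkSeq.2 ⟨t, P, hP, rfl, rfl⟩

theorem Reachable.trans (hxy : Reachable E x y) (hyz : Reachable E y z) : Reachable E x z := by
  obtain ⟨s, P, hP, hP0, hPs⟩ := reachable_iff_exists_isWalkSeq.1 hxy
  obtain ⟨u, Q, hQ, hQ0, hQu⟩ := reachable_iff_exists_isWalkSeq.1 hyz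
  have hjoin : P s = Q 0 := hPs.trans hQ0.symm
  exact reachable_iff_exists_isWalkSeq.2 ⟨s + u, seqAppend s P Q, hP.append hQ hjoin,
    (seqAppend_of_le (Nat.zero_le _)).trans hP0, (seqAppend_add hjoin u).trans hQu⟩

theorem mem_cycleMeans_iff {q : ℝ} :
    q ∈ cycleMeans E w x ↔ ∃ t P, 0 < t ∧ IsWalkSeq E t P ∧ P t = P 0 ∧
      Reachable E x (P 0) ∧ q = seqWeight w t P / t := by
  constructor
  · rintro ⟨t, p, ht, hp, hcl, hx, rfl⟩
    obtain ⟨P, rfl⟩ := Fin.exists_eq_comp_val p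
    exact ⟨t, P, ht, isWalk_iff_isWalkSeq.1 hp, hcl, hx, by rw [walkWeight_eq_seqWeight]⟩
  · rintro ⟨t, P, ht, hP, hcl, hx, rfl⟩
    exact ⟨t, fun m => P m, ht, isWalk_iff_isWalkSeq.2 hP, hcl, hx, by rw [walkWeight_eq_seqWeight]⟩

theorem cycleMeans_nonneg : ∀ q ∈ cycleMeans E w x, 0 ≤ q := by
  rintro q ⟨t, p, -, -, -, -, rfl⟩
  positivity

theorem mcm_nonneg : 0 ≤ mcm E w x :=
  Real.sInf_nonneg cycleMeans_nonneg

theorem mcm_le {W : ℕ} (hW : ∀ a b, E a b → w a b ≤ W) (hne : (cycleMeans E w x).Nonempty) :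
    mcm E w x ≤ W := by
  obtain ⟨q, hq⟩ := hne
  refine (csInf_le ⟨0, cycleMeans_nonneg⟩ hq).trans ?_
  obtain ⟨t, P, ht, hP, -, -, rfl⟩ := mem_cycleMeans_iff.1 hq
  rw [div_le_iff₀ (by positivity), mul_comm]
  exact_mod_cast hP.seqWeight_le hW

variable (E w x) in
def shortCycleMeans : Set ℝ :=
  {q | ∃ t P, 0 < t ∧ t ≤ n ∧ IsWalkSeq E t P ∧ P t = P 0 ∧
    Reachable E x (P 0) ∧ q = seqWeight w t P / t}

theorem zero_mem_lowerBounds_shortCycleMeans : (0 : ℝ) ∈ lowerBounds (shortCycleMeans E w x) := by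
  rintro q ⟨t, P, -, -, -, -, -, rfl⟩
  positivity

theorem mul_le_seqWeight_of_mem_lowerBounds {m : ℝ} (hm : m ∈ lowerBounds (shortCycleMeans E w x))
    (ht : 0 < t) (htn : t ≤ n) (hC : IsWalkSeq E t C) (hcl : C t = C 0)
    (hx : Reachable E x (C 0)) : m * t ≤ seqWeight w t C :=
  (le_div_iff₀ (by positivity)).1 (hm ⟨t, C, ht, htn, hC, hcl, hx, rfl⟩)

theorem IsWalkSeq.exists_short_le {m : ℝ} (hm : m ∈ lowerBounds (shortCycleMeans E w x))
    (hP : IsWalkSeq E t P) (hx : Reachable E x (P 0)) :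
    ∃ s Q, s < n ∧ IsWalkSeq E s Q ∧ Q 0 = P 0 ∧ Q s = P t ∧
      ((t : ℝ) - s) * m + seqWeight w s Q ≤ seqWeight w t P := by
  induction t using Nat.strong_induction_on generalizing P with
  | _ t ih =>
  by_cases ht : t < n
  · exact ⟨t, P, ht, hP, rfl, rfl, by simp⟩
  obtain ⟨i, d, hd, hidn, hloop⟩ := exists_loop P
  rw [Fintype.card_fin] at hidn
  obtain ⟨r, rfl⟩ := Nat.exists_eq_add_of_le (show i + d ≤ t by omega)
  obtain ⟨Q, hQ, hQ0, hQt, hQw⟩ := hP.exists_removeLoop (w := w) hloop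
  obtain ⟨hprefix, hcycle⟩ := isWalkSeq_add_iff.1 (isWalkSeq_add_iff.1 hP).1
  have hloopw := mul_le_seqWeight_of_mem_lowerBounds hm hd (by omega) hcycle hloop.symm
    (hx.trans hprefix.reachable)
  obtain ⟨s, R, hs, hR, hR0, hRt, hRw⟩ := ih (i + r) (by omega) hQ (hQ0 ▸ hx)
  refine ⟨s, R, hs, hR, hR0.trans hQ0, hRt.trans hQt, ?_⟩
  have hsplit : (seqWeight w (i + r) Q : ℝ) + seqWeight w d (fun k => P (i + k)) =
      seqWeight w (i + d + r) P := by exact_mod_cast hQw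
  push_cast at hRw ⊢
  linarith

theorem lowerBounds_shortCycleMeans :
    lowerBounds (shortCycleMeans E w x) = lowerBounds (cycleMeans E w x) := by
  refine subset_antisymm (fun m hm q hq => ?_) (lowerBounds_mono_set ?_)
  · obtain ⟨t, P, ht, hP, hcl, hx, rfl⟩ := mem_cycleMeans_iff.1 hq
    obtain ⟨s, Q, hs, hQ, hQ0, hQt, hw⟩ := hP.exists_short_le hm hx
    have hQw : m * s ≤ seqWeight w s Q := by
      rcases Nat.eq_zero_or_pos s with rfl | hs0
      · simp
      · exact mul_le_seqWeight_of_mem_lowerBounds hm hs0 hs.le hQ (hQt.trans (hcl.trans hQ0.symm))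
          (hQ0 ▸ hx)
    rw [le_div_iff₀ (by positivity)]
    linarith
  · rintro q ⟨t, P, ht, -, hP, hcl, hx, rfl⟩
    exact mem_cycleMeans_iff.2 ⟨t, P, ht, hP, hcl, hx, rfl⟩

theorem deltaNat_le_seqWeight (hP : IsWalkSeq E s P) (hP0 : P 0 = x) (hts : t ≤ s) :
    deltaNat E w t x ≤ seqWeight w s P := by
  refine (Nat.sInf_le ?_).trans (seqWeight_mono hts)
  exact ⟨fun m => P m, isWalk_iff_isWalkSeq.2 fun i hi => hP i (hi.trans_le hts), hP0,
    walkWeight_eq_seqWeight.symm⟩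

theorem exists_isWalkSeq_seqWeight_eq_deltaNat (hout : ∀ v, ∃ u, E v u) (x : Fin n) (t : ℕ) :
    ∃ P, IsWalkSeq E t P ∧ P 0 = x ∧ seqWeight w t P = deltaNat E w t x := by
  choose f hf using hout
  have hne : {c | ∃ p : Fin (t + 1) → Fin n, IsWalk E p ∧ p 0 = x ∧ c = walkWeight w p}.Nonempty := by
    refine ⟨_, fun m => f^[m] x, isWalk_iff_isWalkSeq (P := fun i => f^[i] x) |>.2 ?_, rfl, rfl⟩
    intro i _
    simp only [Function.iterate_succ_apply']
    exact hf _
  obtain ⟨p, hp, hp0, hpw⟩ := Nat.sInf_mem hne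
  obtain ⟨P, rfl⟩ := Fin.exists_eq_comp_val p
  exact ⟨P, isWalk_iff_isWalkSeq.1 hp, hp0, by rw [deltaNat, hpw, walkWeight_eq_seqWeight]⟩

theorem sub_mul_mcm_le_deltaNat (hout : ∀ v, ∃ u, E v u) (x : Fin n) (t : ℕ) :
    ((t : ℝ) - n) * mcm E w x ≤ deltaNat E w t x := by
  obtain ⟨P, hP, hP0, hPw⟩ := exists_isWalkSeq_seqWeight_eq_deltaNat (w := w) hout x t
  have hμ : mcm E w x ∈ lowerBounds (shortCycleMeans E w x) :=
    lowerBounds_shortCycleMeans ▸ fun _ hq => csInf_le ⟨0, cycleMeans_nonneg⟩ hq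
  obtain ⟨s, Q, hs, -, -, -, hw⟩ := hP.exists_short_le hμ (by rw [hP0]; exact Reachable.refl x)
  have hsn : (s : ℝ) ≤ n := by exact_mod_cast hs.le
  have hsμ : ((t : ℝ) - n) * mcm E w x ≤ ((t : ℝ) - s) * mcm E w x :=
    mul_le_mul_of_nonneg_right (by linarith) mcm_nonneg
  rw [← hPw]
  linarith [(Nat.cast_nonneg (seqWeight w s Q) : (0 : ℝ) ≤ _)]

theorem deltaNat_le_of_mem_shortCycleMeans {W : ℕ} (hW : ∀ a b, E a b → w a b ≤ W) {q : ℝ}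
    (hq : q ∈ shortCycleMeans E w x) (t : ℕ) :
    (deltaNat E w t x : ℝ) ≤ (n - 1) * W + (t + n) * q := by
  obtain ⟨c, C, hc, hcn, hC, hcl, hx, rfl⟩ := hq
  obtain ⟨l, A', hA', hA'0, hA'l⟩ := reachable_iff_exists_isWalkSeq.1 hx
  obtain ⟨a, A, ha, hA, hA0, hAa, -⟩ :=
    hA'.exists_short_le (zero_mem_lowerBounds_shortCycleMeans (w := w))
      (by rw [hA'0]; exact Reachable.refl x)
  obtain ⟨R, hR, hR0, -, hRw⟩ := hC.exists_iterate (w := w) hcl (t / c + 1)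
  have hjoin : A a = R 0 := by rw [hAa, hA'l, hR0]
  have hkc : t ≤ (t / c + 1) * c ∧ (t / c + 1) * c ≤ t + c := by
    rw [Nat.succ_mul]
    exact ⟨(Nat.lt_div_mul_add hc).le, Nat.add_le_add_right (Nat.div_mul_le_self t c) c⟩
  have hδ : deltaNat E w t x ≤ a * W + (t / c + 1) * seqWeight w c C := calc
    deltaNat E w t x ≤ seqWeight w (a + (t / c + 1) * c) (seqAppend a A R) :=
      deltaNat_le_seqWeight (hA.append hR hjoin)
        (by rw [seqAppend_of_le (Nat.zero_le _), hA0, hA'0]) (by omega)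
    _ = seqWeight w a A + (t / c + 1) * seqWeight w c C := by rw [seqWeight_append hjoin, hRw]
    _ ≤ a * W + (t / c + 1) * seqWeight w c C := by gcongr; exact hA.seqWeight_le hW
  have hq0 : (0 : ℝ) ≤ seqWeight w c C / c := by positivity
  have haR : (a : ℝ) ≤ n - 1 := by
    have : (a : ℝ) + 1 ≤ n := by exact_mod_cast ha
    linarith
  have hkcR : (((t / c + 1) * c : ℕ) : ℝ) ≤ t + n := by exact_mod_cast hkc.2.trans (by omega)
  calc (deltaNat E w t x : ℝ) ≤ a * W + (t / c + 1 : ℕ) * seqWeight w c C := by exact_mod_cast hδ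
    _ = a * W + (((t / c + 1) * c : ℕ) : ℝ) * (seqWeight w c C / c) := by
      push_cast; field_simp
    _ ≤ (n - 1) * W + (t + n) * (seqWeight w c C / c) := by gcongr

theorem deltaNat_le_add_mul_mcm {W : ℕ} (hW : ∀ a b, E a b → w a b ≤ W)
    (hne : (cycleMeans E w x).Nonempty) (t : ℕ) :
    (deltaNat E w t x : ℝ) ≤ (n - 1) * W + (t + n) * mcm E w x := by
  have hpos : (0 : ℝ) < t + n := by
    have : (0 : ℝ) < n := by exact_mod_cast x.pos
    positivity
  have hB : ((deltaNat E w t x : ℝ) - (n - 1) * W) / (t + n) ∈ lowerBounds (cycleMeans E w x) := by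
    rw [← lowerBounds_shortCycleMeans]
    intro q hq
    rw [div_le_iff₀ hpos]
    linarith [deltaNat_le_of_mem_shortCycleMeans hW hq t]
  have := (div_le_iff₀ hpos).1 (le_csInf hne hB)
  unfold mcm
  linarith

end CycleMeans

theorem delta_div_t_approx_mcm_general {n : ℕ} (E : Fin n → Fin n → Prop)
    (w : Fin n → Fin n → ℕ) (hout : ∀ v : Fin n, ∃ u : Fin n, E v u)
    (W : ℕ) (hW : ∀ a b : Fin n, E a b → w a b ≤ W)
    (x : Fin n)
    (ε : ℝ) (hε0 : 0 < ε)
    (hmu : 1 / (n : ℝ) ≤ mcm E w x)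
    (t : ℕ) (ht : (n : ℝ) ^ 2 * (W : ℝ) / ε ≤ (t : ℝ)) :
    (1 - ε) * mcm E w x ≤ (deltaNat E w t x : ℝ) / (t : ℝ) ∧
    (deltaNat E w t x : ℝ) / (t : ℝ) ≤ (1 + ε) * mcm E w x := by
  have hn : (1 : ℝ) ≤ n := by exact_mod_cast x.pos
  have hμ : 0 < mcm E w x := (by positivity : (0 : ℝ) < 1 / n).trans_le hmu
  have hnμ : 1 ≤ n * mcm E w x := by rwa [div_le_iff₀ (by positivity), mul_comm] at hmu
  have hne : (cycleMeans E w x).Nonempty := by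
    by_contra h
    rw [Set.not_nonempty_iff_eq_empty] at h
    simp [mcm, h] at hμ
  have hW1 : (1 : ℝ) ≤ W := by
    have : 0 < W := by exact_mod_cast hμ.trans_le (mcm_le hW hne)
    exact_mod_cast this
  have hεt : (n : ℝ) ^ 2 * W ≤ ε * t := by rw [div_le_iff₀ hε0] at ht; linarith
  have hnεt : (n : ℝ) ≤ ε * t := by nlinarith
  have htpos : (0 : ℝ) < t := by nlinarith
  have hlow := sub_mul_mcm_le_deltaNat (w := w) hout x t
  have hup := deltaNat_le_add_mul_mcm hW hne t
  constructor
  · rw [le_div_iff₀ htpos]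
    nlinarith
  · rw [div_le_iff₀ htpos]
    -- n²Wμ - (n - 1)W - nμ = (nμ - 1)(nW - 1) + (W - 1)
    nlinarith [mul_nonneg (sub_nonneg.2 hnμ) (sub_nonneg.2 (one_le_mul_of_one_le_of_one_le hn hW1)),
      mul_le_mul_of_nonneg_right hεt hμ.le]

/-- If `0 < ε ≤ 1/2` and `t ≥ n²·W/ε` and `μ(x) ≥ 1/n`, then
`(1−ε)·μ(x) ≤ δ_t(x)/t ≤ (1+ε)·μ(x)`. -/
theorem delta_div_t_approx_mcm {n : ℕ} (E : Fin n → Fin n → Prop)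
    (w : Fin n → Fin n → ℕ) (hout : ∀ v : Fin n, ∃ u : Fin n, E v u)
    (W : ℕ) (hW : ∀ a b : Fin n, E a b → w a b ≤ W)
    (x : Fin n) (hcyc : (cycleMeans E w x).Nonempty)
    (ε : ℝ) (hε0 : 0 < ε) (hε1 : ε ≤ 1 / 2)
    (hmu : 1 / (n : ℝ) ≤ mcm E w x)
    (t : ℕ) (ht : (n : ℝ) ^ 2 * (W : ℝ) / ε ≤ (t : ℝ)) :
    (1 - ε) * mcm E w x ≤ (deltaNat E w t x : ℝ) / (t : ℝ) ∧
    (deltaNat E w t x : ℝ) / (t : ℝ) ≤ (1 + ε) * mcm E w x :=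
  delta_div_t_approx_mcm_general E w hout W hW x ε hε0 hmu t ht
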